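/- Let C be a linear code of length n over a finite commutative principal ideal ring R, let λ be a positive integer, and define I = (I_0, …, I_t) by I_i = {j ∈ {0,…,t} : a_j a_k ≠ 0 for all k such that a_i a_k ≠ 0}. For submultisets X, Y of t·[n], write X ≤ Y if M_i(X) ⊆ ∪_{j ∈ I_i} M_j(Y) for all i = 0, …, t. Then for every submultiset Y of t·[n], (B^I_C(Y))^λ = Σ_{X ⊆ t·[n], X ≤ Y} A^[λ]_C(X). -/

import Mathlib

noncomputable section
open scoped BigOperators

/-- The dual of a linear code `C ⊆ Rⁿ` with respect to the standard inner
product `u·v = ∑ ℓ, u ℓ * v ℓ`. -/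
def dualCode {R : Type*} [CommRing R] {n : ℕ} (C : Submodule R (Fin n → R)) :
    Submodule R (Fin n → R) where
  carrier := {v | ∀ u ∈ C, ∑ ℓ, u ℓ * v ℓ = 0}
  add_mem' := by
    intro v w hv hw u hu
    simp only [Set.mem_setOf_eq] at *
    have h1 := hv u hu
    have h2 := hw u hu
    simp only [Pi.add_apply, mul_add, Finset.sum_add_distrib, h1, h2, add_zero]
  zero_mem' := by
    intro u hu
    simp
  smul_mem' := by
    intro c v hv u hu
    simp only [Set.mem_setOf_eq] at *
    have h := hv u hu
    have : ∑ ℓ, u ℓ * (c • v) ℓ = c * ∑ ℓ, u ℓ * v ℓ := by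
      rw [Finset.mul_sum]
      exact Finset.sum_congr rfl fun ℓ _ => by
        simp only [Pi.smul_apply, smul_eq_mul]; ring
    rw [this, h, mul_zero]

/-- A finite commutative ring is Frobenius iff `|C|·|C⊥| = |R|ⁿ` for every
linear code `C` of every length `n` over `R`. -/
def IsFrobeniusRing (R : Type*) [CommRing R] [Fintype R] : Prop :=
  ∀ (n : ℕ) (C : Submodule R (Fin n → R)),
    Nat.card C * Nat.card (dualCode C) = Fintype.card R ^ n

open Classical

/-- `A^[λ]_C(X)`: the number of `λ`-tuples `(c₁, …, c_λ) ∈ C^λ` such that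
`S^[λ]_i(c₁, …, c_λ) = M_i(X)` for all `i`, where
`S^[λ]_i(c₁, …, c_λ) = {ℓ : c_{1ℓ}R + ⋯ + c_{λℓ}R = a_i R}` and the submultiset
`X ⊆ t·[n]` is identified with its multiplicity function `m`. -/
def AL {R : Type*} [CommRing R] {t n : ℕ} (a : Fin (t + 1) → R)
    (C : Submodule R (Fin n → R)) (lam : ℕ) (m : Fin n → Fin (t + 1)) : ℕ :=
  Nat.card {cs : Fin lam → C // ∀ (i : Fin (t + 1)) (ℓ : Fin n),
    m ℓ = i ↔
      Ideal.span (Set.range fun k => (cs k : Fin n → R) ℓ) = Ideal.span {a i}}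

/-- For a tuple `F = (F₀, …, F_t)` of subsets of `{0, …, t}` and a submultiset
`X ⊆ t·[n]` (identified with its multiplicity function `m : [n] → {0, …, t}`),
`B^F_C(X) = |{c ∈ C : S_i(c) ⊆ ∪_{j ∈ F_i} M_j(X) for all i}|`. -/
def BF {R : Type*} [CommRing R] {t n : ℕ} (a : Fin (t + 1) → R)
    (C : Submodule R (Fin n → R)) (F : Fin (t + 1) → Set (Fin (t + 1)))
    (m : Fin n → Fin (t + 1)) : ℕ :=
  Nat.card {c : C // ∀ (i : Fin (t + 1)) (ℓ : Fin n),
    Ideal.span {(c : Fin n → R) ℓ} = Ideal.span {a i} → m ℓ ∈ F i}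

/-!
Read through annihilators, `j ∈ I_i` says `ann(a_j) ⊆ ann(a_i)`. The annihilator of
`c_{1ℓ}R + ⋯ + c_{λℓ}R` is the intersection of the annihilators of the `c_{kℓ}R`, so a λ-tuple of
codewords has all its entries counted by `B^I_C(Y)` exactly when its type `X`, given by
`M_i(X) = S^[λ]_i`, satisfies `X ≤ Y`. Sorting the tuples by type gives the sum; this needs the
ring to be principal, so that every such sum of ideals is some `a_iR`.
-/

namespace PrincipalIdealRingCode

section Annihilators

variable {R : Type*} [CommRing R]

theorem mul_eq_zero_iff_of_span_singleton_eq {r s : R}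
    (h : Ideal.span {r} = Ideal.span {s}) (x : R) : x * r = 0 ↔ x * s = 0 := by
  rw [← smul_eq_mul, ← smul_eq_mul, ← Submodule.mem_annihilator_span_singleton,
    ← Submodule.mem_annihilator_span_singleton]
  exact Iff.of_eq (congrArg (x ∈ Submodule.annihilator ·) h)

theorem annihilator_span_singleton_le_iff {t : ℕ} {a : Fin (t + 1) → R}
    (hrep : ∀ r : R, ∃ i, Ideal.span {r} = Ideal.span {a i}) (x y : R) :
    (Ideal.span {x}).annihilator ≤ (Ideal.span {y}).annihilator ↔
      ∀ k, x * a k = 0 → y * a k = 0 := by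
  simp only [SetLike.le_def, Submodule.mem_annihilator_span_singleton, smul_eq_mul]
  refine ⟨fun h k hk => ?_, fun h z hz => ?_⟩
  · rw [mul_comm] at hk ⊢; exact h hk
  · obtain ⟨k, hk⟩ := hrep z
    rw [mul_comm, mul_eq_zero_iff_of_span_singleton_eq hk] at hz ⊢
    exact h k hz

theorem le_annihilator_span_range_iff {ι : Type*} (J : Ideal R) (c : ι → R) :
    J ≤ (Ideal.span (Set.range c)).annihilator ↔ ∀ k, J ≤ (Ideal.span {c k}).annihilator := by
  rw [Ideal.span, Submodule.span_range_eq_iSup, Submodule.annihilator_iSup, le_iInf_iff]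

end Annihilators

section RepresentativeIndex

variable {R : Type*} [CommRing R] {t : ℕ} {a : Fin (t + 1) → R}

theorem mem_iff_annihilator_le {I : Fin (t + 1) → Set (Fin (t + 1))}
    (hrep : ∀ r : R, ∃ i, Ideal.span {r} = Ideal.span {a i})
    (hI : ∀ i, I i = {j | ∀ k, a i * a k ≠ 0 → a j * a k ≠ 0}) (i j : Fin (t + 1)) :
    j ∈ I i ↔ (Ideal.span {a j}).annihilator ≤ (Ideal.span {a i}).annihilator := by
  rw [annihilator_span_singleton_le_iff hrep, hI]
  exact forall_congr' fun k => not_imp_not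

variable [IsPrincipalIdealRing R]

theorem exists_eq_span_singleton (hrep : ∀ r : R, ∃ i, Ideal.span {r} = Ideal.span {a i})
    (J : Ideal R) : ∃ i, J = Ideal.span {a i} := by
  obtain ⟨g, rfl⟩ := Submodule.IsPrincipal.principal J
  exact hrep g

def idealIndex (hrep : ∀ r : R, ∃ i, Ideal.span {r} = Ideal.span {a i}) (J : Ideal R) :
    Fin (t + 1) :=
  (exists_eq_span_singleton hrep J).choose

theorem eq_span_idealIndex (hrep : ∀ r : R, ∃ i, Ideal.span {r} = Ideal.span {a i})
    (J : Ideal R) : J = Ideal.span {a (idealIndex hrep J)} :=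
  (exists_eq_span_singleton hrep J).choose_spec

theorem idealIndex_eq_iff (hrep : ∀ r : R, ∃ i, Ideal.span {r} = Ideal.span {a i})
    (hinj : ∀ i j, Ideal.span {a i} = Ideal.span {a j} → i = j) (J : Ideal R) (i : Fin (t + 1)) :
    idealIndex hrep J = i ↔ J = Ideal.span {a i} := by
  refine ⟨fun h => h ▸ eq_span_idealIndex hrep J, fun h => hinj _ _ ?_⟩
  rw [← eq_span_idealIndex hrep J, h]

theorem mem_idealIndex_iff {I : Fin (t + 1) → Set (Fin (t + 1))}
    (hrep : ∀ r : R, ∃ i, Ideal.span {r} = Ideal.span {a i})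
    (hI : ∀ i, I i = {j | ∀ k, a i * a k ≠ 0 → a j * a k ≠ 0}) (J : Ideal R) (j : Fin (t + 1)) :
    j ∈ I (idealIndex hrep J) ↔ (Ideal.span {a j}).annihilator ≤ J.annihilator := by
  rw [mem_iff_annihilator_le hrep hI, ← eq_span_idealIndex hrep J]

theorem forall_mem_idealIndex_span_singleton_iff {I : Fin (t + 1) → Set (Fin (t + 1))}
    (hrep : ∀ r : R, ∃ i, Ideal.span {r} = Ideal.span {a i})
    (hI : ∀ i, I i = {j | ∀ k, a i * a k ≠ 0 → a j * a k ≠ 0}) {ι : Type*} (c : ι → R)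
    (j : Fin (t + 1)) :
    (∀ k, j ∈ I (idealIndex hrep (Ideal.span {c k}))) ↔
      j ∈ I (idealIndex hrep (Ideal.span (Set.range c))) := by
  simp only [mem_idealIndex_iff hrep hI, le_annihilator_span_range_iff]

end RepresentativeIndex

section Counting

theorem card_subtype_forall_fin {α : Type*} (p : α → Prop) (m : ℕ) :
    Nat.card {f : Fin m → α // ∀ k, p (f k)} = Nat.card {x // p x} ^ m := by
  rw [Nat.card_congr (Equiv.subtypePiEquivPi), Nat.card_pi, Finset.prod_const,
    Finset.card_univ, Fintype.card_fin]

theorem card_subtype_comp_eq_sum_card_fiber {α β : Type*} [Finite α] [Fintype β] (f : α → β)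
    (p : β → Prop) [DecidablePred p] :
    Nat.card {x // p (f x)} = ∑ b ∈ Finset.univ.filter p, Nat.card {x // f x = b} := by
  rw [← Nat.card_congr (Equiv.sigmaSubtypeFiberEquivSubtype f fun _ => Iff.rfl), Nat.card_sigma]
  exact (Finset.sum_subtype _ (p := p) Finset.mem_filter_univ fun b => Nat.card {x // f x = b}).symm

end Counting

section Codes

variable {R : Type*} [CommRing R] [IsPrincipalIdealRing R] {t n : ℕ} {a : Fin (t + 1) → R}

/-- The submultiset `X` with `M_i(X) = S^[λ]_i(c₁, …, c_λ)` for all `i`. -/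
def supportType (hrep : ∀ r : R, ∃ i, Ideal.span {r} = Ideal.span {a i}) {lam : ℕ}
    (cs : Fin lam → Fin n → R) : Fin n → Fin (t + 1) :=
  fun ℓ => idealIndex hrep (Ideal.span (Set.range fun k => cs k ℓ))

theorem BF_eq_card (hrep : ∀ r : R, ∃ i, Ideal.span {r} = Ideal.span {a i})
    (hinj : ∀ i j, Ideal.span {a i} = Ideal.span {a j} → i = j) (C : Submodule R (Fin n → R))
    (F : Fin (t + 1) → Set (Fin (t + 1))) (Y : Fin n → Fin (t + 1)) :
    BF a C F Y =
      Nat.card {c : C // ∀ ℓ, Y ℓ ∈ F (idealIndex hrep (Ideal.span {(c : Fin n → R) ℓ}))} := by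
  refine Nat.card_congr (Equiv.subtypeEquivRight fun c => ?_)
  simp only [← idealIndex_eq_iff hrep hinj]
  rw [forall_comm]
  exact forall_congr' fun ℓ => forall_eq'

theorem AL_eq_card (hrep : ∀ r : R, ∃ i, Ideal.span {r} = Ideal.span {a i})
    (hinj : ∀ i j, Ideal.span {a i} = Ideal.span {a j} → i = j) (C : Submodule R (Fin n → R))
    (lam : ℕ) (X : Fin n → Fin (t + 1)) :
    AL a C lam X =
      Nat.card {cs : Fin lam → C // supportType hrep (fun k => (cs k : Fin n → R)) = X} := by
  refine Nat.card_congr (Equiv.subtypeEquivRight fun cs => ?_)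
  simp only [← idealIndex_eq_iff hrep hinj, funext_iff, supportType]
  rw [forall_comm]
  exact forall_congr' fun ℓ => ⟨fun h => (h _).1 rfl, fun h i => by rw [h]⟩

end Codes

end PrincipalIdealRingCode

open PrincipalIdealRingCode in
theorem stmt16 {R : Type*} [CommRing R] [Fintype R] [IsPrincipalIdealRing R]
    {t : ℕ} (a : Fin (t + 1) → R)
    (hrep : ∀ r : R, ∃ i, Ideal.span {r} = Ideal.span {a i})
    (hinj : ∀ i j, Ideal.span {a i} = Ideal.span {a j} → i = j)
    {n : ℕ} (C : Submodule R (Fin n → R))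
    (I : Fin (t + 1) → Set (Fin (t + 1)))
    (hI : ∀ i, I i = {j | ∀ k, a i * a k ≠ 0 → a j * a k ≠ 0})
    (lam : ℕ) :
    ∀ Y : Fin n → Fin (t + 1),
      (BF a C I Y) ^ lam =
        ∑ X ∈ Finset.univ.filter
          (fun X : Fin n → Fin (t + 1) => ∀ ℓ, Y ℓ ∈ I (X ℓ)),
          AL a C lam X := by
  intro Y
  have tuple_iff (cs : Fin lam → C) :
      (∀ k ℓ, Y ℓ ∈ I (idealIndex hrep (Ideal.span {(cs k : Fin n → R) ℓ}))) ↔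
        ∀ ℓ, Y ℓ ∈ I (supportType hrep (fun k => (cs k : Fin n → R)) ℓ) := by
    rw [forall_comm]
    exact forall_congr' fun ℓ => forall_mem_idealIndex_span_singleton_iff hrep hI _ (Y ℓ)
  rw [BF_eq_card hrep hinj, ← card_subtype_forall_fin,
    Nat.card_congr (Equiv.subtypeEquivRight tuple_iff)]
  simp only [AL_eq_card hrep hinj]
  exact card_subtype_comp_eq_sum_card_fiber _ fun X : Fin n → Fin (t + 1) => ∀ ℓ, Y ℓ ∈ I (X ℓ)
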